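/- arXiv:1608.02295 — 5 statements merged into one kernel-verified Lean document; each statement's English description precedes it below -/
import Mathlib

section
/- Let p be a prime and let w = (w_1, ..., w_l) be a vector in ℚ_p^l whose coordinates are algebraic over ℚ and linearly independent over ℚ. Then there exist constants c > 0 and L > 0 such that for every nonzero integer vector z = (z_1, ..., z_l) ∈ ℤ^l, the p-adic norm of the inner product ⟨z, w⟩ = Σ z_j w_j satisfies ‖⟨z, w⟩‖_p ≥ c ‖z‖^{-L}, where ‖z‖ denotes the supremum norm of z. -/
/-!
Put `α = ∑ zᵢ wᵢ`. It lies in the number field `K = ℚ(w)`, of degree `d`, and is nonzero by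
linear independence. For one fixed integer `N ≠ 0` the matrices of multiplication by the `N wᵢ` on
`K` are integral, so multiplication by `Nα` has the integer matrix `∑ zᵢ Bᵢ`, whose entries are
linear in `z`. Its characteristic polynomial `P ∈ ℤ[X]` kills `Nα`, and its constant term is, up to
sign, the norm of `Nα`: a nonzero integer of size `O(‖z‖^d)`. In `ℚ_p` a nonzero integer `m` has
`‖m‖_p ≥ |m|⁻¹`, while `P(Nα) = 0` and the ultrametric inequality give `‖P(0)‖_p ≤ ‖Nα‖_p` as soon
as `‖Nα‖_p ≤ 1`.
-/

open Polynomial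

namespace IsUltrametricDist

variable {R : Type*} [SeminormedRing R] [NormOneClass R] [IsUltrametricDist R]

theorem norm_aeval_le_one (P : ℤ[X]) {x : R} (hx : ‖x‖ ≤ 1) : ‖aeval x P‖ ≤ 1 := by
  induction P using Polynomial.induction_on' with
  | add P Q hP hQ =>
    rw [map_add]
    exact (norm_add_le_max (aeval x P) (aeval x Q)).trans (max_le hP hQ)
  | monomial n a =>
    rw [aeval_monomial, algebraMap_int_eq, eq_intCast]
    calc ‖(a : R) * x ^ n‖ ≤ ‖(a : R)‖ * ‖x‖ ^ n :=
          (norm_mul_le _ _).trans (by gcongr; exact _root_.norm_pow_le x n)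
      _ ≤ 1 :=
        mul_le_one₀ (norm_intCast_le_one R a) (by positivity) (pow_le_one₀ (norm_nonneg x) hx)

theorem norm_coeff_zero_le_of_aeval_eq_zero {P : ℤ[X]} {x : R} (hx : ‖x‖ ≤ 1)
    (hP : aeval x P = 0) : ‖(P.coeff 0 : R)‖ ≤ ‖x‖ := by
  have hsplit : (P.coeff 0 : R) = -(x * aeval x P.divX) := by
    rw [← X_mul_divX_add P, map_add, map_mul, aeval_X, aeval_C] at hP
    simpa [eq_neg_iff_add_eq_zero, add_comm] using hP
  rw [hsplit, norm_neg]
  exact (norm_mul_le _ _).trans (mul_le_of_le_one_right (norm_nonneg x) (norm_aeval_le_one _ hx))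

end IsUltrametricDist

namespace Padic

variable {p : ℕ} [Fact p.Prime]

theorem inv_abs_le_norm_intCast {m : ℤ} (hm : m ≠ 0) : |(m : ℝ)|⁻¹ ≤ ‖(m : ℚ_[p])‖ := by
  have hp : (0 : ℝ) < p := by exact_mod_cast (Fact.out : p.Prime).pos
  set n := padicValInt p m
  have hnorm : ‖(m : ℚ_[p])‖ = ((p : ℝ) ^ n)⁻¹ := by
    rw [norm_eq_zpow_neg_valuation (by exact_mod_cast hm), valuation_intCast, zpow_neg,
      zpow_natCast]
  have hdvd : ((p ^ n : ℕ) : ℤ) ∣ m := by exact_mod_cast padicValInt_dvd m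
  have hle : (p : ℝ) ^ n ≤ |(m : ℝ)| := by
    exact_mod_cast Int.le_of_dvd (abs_pos.mpr hm) ((dvd_abs _ _).mpr hdvd)
  rw [hnorm]
  exact inv_anti₀ (by positivity) hle

theorem min_one_inv_abs_coeff_zero_le_norm {x : ℚ_[p]} {P : ℤ[X]} (hP : aeval x P = 0)
    (h0 : P.coeff 0 ≠ 0) : min 1 |(P.coeff 0 : ℝ)|⁻¹ ≤ ‖x‖ := by
  rcases le_or_gt ‖x‖ 1 with hx | hx
  · calc min 1 |(P.coeff 0 : ℝ)|⁻¹ ≤ |(P.coeff 0 : ℝ)|⁻¹ := min_le_right _ _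
      _ ≤ ‖(P.coeff 0 : ℚ_[p])‖ := inv_abs_le_norm_intCast h0
      _ ≤ ‖x‖ := IsUltrametricDist.norm_coeff_zero_le_of_aeval_eq_zero hx hP
  · exact (min_le_left _ _).trans hx.le

end Padic

namespace Matrix

theorem exists_map_intCast_eq_smul {ι m n : Type*} [Finite ι] [Finite m] [Finite n]
    (M : ι → Matrix m n ℚ) : ∃ N : ℤ, N ≠ 0 ∧ ∃ B : ι → Matrix m n ℤ,
      ∀ i, (B i).map (Int.cast : ℤ → ℚ) = N • M i := by
  obtain ⟨⟨N, hN⟩, hB⟩ := IsLocalization.exist_integer_multiples_of_finite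
    (nonZeroDivisors ℤ) (fun x : ι × m × n => M x.1 x.2.1 x.2.2)
  choose B hB using hB
  refine ⟨N, nonZeroDivisors.ne_zero hN, fun i => Matrix.of fun j k => B (i, j, k), fun i => ?_⟩
  ext j k
  simpa using hB (i, j, k)

theorem exists_abs_det_sum_smul_le {ι n : Type*} [Fintype ι] [Fintype n] [DecidableEq n]
    (B : ι → Matrix n n ℤ) :
    ∃ C : ℝ, ∀ z : ι → ℤ, |((∑ i, z i • B i).det : ℝ)| ≤ C * ‖z‖ ^ Fintype.card n := by
  let abv : AbsoluteValue ℤ ℝ :=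
    AbsoluteValue.abs.comp (f := Int.castRingHom ℝ) Int.cast_injective
  have habv (x : ℤ) : abv x = |(x : ℝ)| := rfl
  obtain ⟨E, hE⟩ := Finite.exists_le fun x : ι × n × n => abv (B x.1 x.2.1 x.2.2)
  refine ⟨(Fintype.card n).factorial * (Fintype.card ι * E) ^ Fintype.card n, fun z => ?_⟩
  calc |((∑ i, z i • B i).det : ℝ)| = abv (∑ i, z i • B i).det := (habv _).symm
    _ ≤ (Fintype.card n).factorial • (Finset.univ.card • ‖z‖ * E) ^ Fintype.card n :=
      det_sum_smul_le Finset.univ (fun i j k => hE (i, j, k))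
        (fun i => by rw [habv, ← Int.norm_eq_abs]; exact norm_le_pi_norm z i)
    _ = _ := by simp only [nsmul_eq_mul, Finset.card_univ]; ring

end Matrix

namespace Algebra

variable {R S n : Type*} [CommRing R] [CommRing S] [Algebra R S] [Fintype n] [DecidableEq n]

theorem aeval_charpoly_eq_zero_of_map_intCast_eq_leftMulMatrix (b : Module.Basis n R S) {θ : S}
    {A : Matrix n n ℤ} (hA : A.map (Int.cast : ℤ → R) = leftMulMatrix b θ) :
    aeval θ A.charpoly = 0 := by
  have hχ : A.charpoly.map (Int.castRingHom R) = (leftMulMatrix b θ).charpoly := by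
    rw [← Matrix.charpoly_map, ← hA]
    rfl
  apply leftMulMatrix_injective b
  rw [← aeval_map_algebraMap R, algebraMap_int_eq, hχ, map_zero, ← aeval_algHom_apply]
  exact Matrix.aeval_self_charpoly _

theorem det_ne_zero_of_map_intCast_eq_leftMulMatrix [IsDomain R] [IsDomain S]
    (b : Module.Basis n R S) {θ : S} {A : Matrix n n ℤ}
    (hA : A.map (Int.cast : ℤ → R) = leftMulMatrix b θ) (hθ : θ ≠ 0) : A.det ≠ 0 := by
  have : ((A.det : ℤ) : R) ≠ 0 := by
    rw [Int.cast_det, hA, ← norm_eq_matrix_det]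
    exact (norm_ne_zero_iff_of_basis b).mpr hθ
  exact fun h => this (by simp [h])

end Algebra

theorem exists_aeval_int_smul_sum_eq_zero_abs_coeff_zero_le {K ι : Type*} [CommRing K]
    [IsDomain K] [Algebra ℚ K] [Module.Finite ℚ K] [Fintype ι] (v : ι → K) :
    ∃ N : ℤ, ∃ C : ℝ, ∀ z : ι → ℤ, ∑ i, z i • v i ≠ 0 → ∃ P : ℤ[X],
      aeval (N • ∑ i, z i • v i) P = 0 ∧ P.coeff 0 ≠ 0 ∧
        |(P.coeff 0 : ℝ)| ≤ C * ‖z‖ ^ Module.finrank ℚ K := by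
  let b := Module.finBasis ℚ K
  obtain ⟨N, hN, B, hB⟩ :=
    Matrix.exists_map_intCast_eq_smul fun i => Algebra.leftMulMatrix b (v i)
  obtain ⟨C, hC⟩ := Matrix.exists_abs_det_sum_smul_le B
  have : CharZero K := charZero_of_injective_algebraMap (algebraMap ℚ K).injective
  refine ⟨N, C, fun z hz => ⟨(∑ i, z i • B i).charpoly, ?_⟩⟩
  have hA : (∑ i, z i • B i).map (Int.cast : ℤ → ℚ) =
      Algebra.leftMulMatrix b (N • ∑ i, z i • v i) := by
    simp only [map_zsmul, map_sum, Finset.smul_sum]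
    simp_rw [smul_comm N, ← hB]
    ext j k
    simp only [Matrix.map_apply, Matrix.sum_apply, Matrix.smul_apply, smul_eq_mul, Int.cast_sum,
      Int.cast_mul]
    simp only [zsmul_eq_mul]
  have hdet : |(∑ i, z i • B i).charpoly.coeff 0| = |(∑ i, z i • B i).det| := by
    rw [Matrix.det_eq_sign_charpoly_coeff, abs_mul, abs_pow, abs_neg, abs_one, one_pow, one_mul]
  refine ⟨Algebra.aeval_charpoly_eq_zero_of_map_intCast_eq_leftMulMatrix b hA, ?_, ?_⟩
  · rw [← abs_ne_zero, hdet, abs_ne_zero]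
    exact Algebra.det_ne_zero_of_map_intCast_eq_leftMulMatrix b hA (smul_ne_zero hN hz)
  · rw [← Int.cast_abs, hdet, Int.cast_abs]
    simpa only [Fintype.card_fin] using hC z

theorem exists_aeval_int_smul_sum_eq_zero_abs_coeff_zero_le_of_isAlgebraic {L ι : Type*}
    [CommRing L] [IsDomain L] [Algebra ℚ L] [Fintype ι] {w : ι → L}
    (halg : ∀ i, IsAlgebraic ℚ (w i)) :
    ∃ N : ℤ, ∃ C : ℝ, ∃ d > 0, ∀ z : ι → ℤ, ∑ i, z i • w i ≠ 0 → ∃ P : ℤ[X],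
      aeval (N • ∑ i, z i • w i) P = 0 ∧ P.coeff 0 ≠ 0 ∧ |(P.coeff 0 : ℝ)| ≤ C * ‖z‖ ^ d := by
  let K := Algebra.adjoin ℚ (Set.range w)
  have : Module.Finite ℚ K := Algebra.finite_adjoin_of_finite_of_isIntegral (Set.finite_range w)
    (by rintro _ ⟨i, rfl⟩; exact (halg i).isIntegral)
  let v (i : ι) : K := ⟨w i, Algebra.subset_adjoin (Set.mem_range_self i)⟩
  obtain ⟨N, C, hC⟩ := exists_aeval_int_smul_sum_eq_zero_abs_coeff_zero_le v
  refine ⟨N, C, Module.finrank ℚ K, Module.finrank_pos, fun z hz => ?_⟩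
  have hv : algebraMap K L (∑ i, z i • v i) = ∑ i, z i • w i := by simp [v]
  obtain ⟨P, hP, hP0, hPC⟩ := hC z fun h0 => hz (by rw [← hv, h0, map_zero])
  refine ⟨P, ?_, hP0, hPC⟩
  rw [← hv, ← map_zsmul, aeval_algebraMap_apply, hP, map_zero]

theorem one_le_pi_norm_of_ne_zero {ι : Type*} [Fintype ι] {z : ι → ℤ} (hz : z ≠ 0) : 1 ≤ ‖z‖ := by
  obtain ⟨i, hi⟩ := Function.ne_iff.mp hz
  calc (1 : ℝ) ≤ ‖z i‖ := by rw [Int.norm_eq_abs]; exact_mod_cast Int.one_le_abs hi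
    _ ≤ ‖z‖ := norm_le_pi_norm z i

theorem inv_max_one_mul_rpow_neg_le_min_one_inv {C t a : ℝ} {d : ℕ} (ht : 1 ≤ t) (ha : 0 < a)
    (haC : a ≤ C * t ^ d) : (max C 1)⁻¹ * t ^ (-(d : ℝ)) ≤ min 1 a⁻¹ := by
  have htd : 1 ≤ t ^ d := one_le_pow₀ ht
  rw [Real.rpow_neg (by positivity), Real.rpow_natCast, ← mul_inv]
  refine le_min (inv_le_one_of_one_le₀ (one_le_mul_of_one_le_of_one_le (le_max_right _ _) htd))
    (inv_anti₀ ha (haC.trans ?_))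
  gcongr
  exact le_max_left _ _

/-- p-adic Diophantine property: if the coordinates of `w ∈ ℚ_p^l` are algebraic over `ℚ`
and linearly independent over `ℚ`, then there are `c > 0`, `L > 0` such that
`‖⟨z, w⟩‖_p ≥ c ‖z‖^{-L}` for all nonzero integer vectors `z`. -/
theorem stmt1 (p : ℕ) [Fact p.Prime] (l : ℕ) (w : Fin l → ℚ_[p])
    (halg : ∀ i, IsAlgebraic ℚ (w i)) (hli : LinearIndependent ℚ w) :
    ∃ c > (0 : ℝ), ∃ L > (0 : ℝ), ∀ z : Fin l → ℤ, z ≠ 0 →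
      c * ‖z‖ ^ (-L) ≤ ‖∑ i, (z i : ℚ_[p]) * w i‖ := by
  obtain ⟨N, C, d, hd, hC⟩ :=
    exists_aeval_int_smul_sum_eq_zero_abs_coeff_zero_le_of_isAlgebraic halg
  refine ⟨(max C 1)⁻¹, by positivity, d, by exact_mod_cast hd, fun z hz => ?_⟩
  have hα : ∑ i, z i • w i ≠ 0 := fun h0 =>
    hz (funext (Fintype.linearIndependent_iff.mp (hli.restrict_scalars' ℤ) z h0))
  obtain ⟨P, hP, hP0, hPC⟩ := hC z hα
  simp only [zsmul_eq_mul] at hP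
  calc (max C 1)⁻¹ * ‖z‖ ^ (-(d : ℝ)) ≤ min 1 |(P.coeff 0 : ℝ)|⁻¹ :=
        inv_max_one_mul_rpow_neg_le_min_one_inv (one_le_pi_norm_of_ne_zero hz) (by positivity) hPC
    _ ≤ ‖(N : ℚ_[p]) * ∑ i, (z i : ℚ_[p]) * w i‖ := Padic.min_one_inv_abs_coeff_zero_le_norm hP hP0
    _ ≤ ‖∑ i, (z i : ℚ_[p]) * w i‖ := by
        rw [norm_mul]
        exact mul_le_of_le_one_left (norm_nonneg _) (Padic.norm_int_le_one N)
end

section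
/- Let p be a prime, and let V ⊆ ℚ_p^l be a ℚ_p-linear subspace that is spanned by vectors with coordinates algebraic over ℚ, and suppose V is not contained in any proper subspace of ℚ_p^l defined over ℚ. Then there exists a vector w ∈ V with all coordinates algebraic over ℚ such that the coordinates of w are linearly independent over ℚ. -/
/-!
Pick finitely many vectors `u₀, …, u_{n-1}` with algebraic coordinates spanning `V`, let `L` be
the number field generated by their coordinates, and take `t ∈ ℚ_p` algebraic of degree
`> [L : ℚ] · n`: a `q`-th root of `1 + p` for a large prime `q`, which exists by Hensel's lemma.
Then `w = ∑ tʲ uⱼ` works. A rational relation `∑ cᵢ wᵢ = 0` reads `∑ γⱼ tʲ = 0` with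
`γⱼ = ∑ cᵢ uⱼᵢ ∈ L`, and `t` has degree `> n` over `L`, so every `γⱼ` vanishes. Hence `V` lies in
the kernel of the rational form `c`, a subspace defined over `ℚ`, which forces `c = 0`.
-/

open Polynomial Module IntermediateField

theorem Nat.pow_ne_of_one_lt_of_lt_two_pow {a q : ℕ} (h₁ : 1 < a) (h₂ : a < 2 ^ q) (k : ℕ) :
    k ^ q ≠ a := by
  rintro rfl
  rcases Nat.lt_or_ge k 2 with hk | hk
  · have := Nat.pow_le_pow_left (Nat.le_of_lt_succ hk) q
    simp only [one_pow] at this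
    omega
  · exact absurd (Nat.pow_le_pow_left hk q) (by omega)

theorem Rat.pow_ne_natCast_of_one_lt_of_lt_two_pow {a q : ℕ} (h₁ : 1 < a) (h₂ : a < 2 ^ q)
    (b : ℚ) : b ^ q ≠ a := by
  intro h
  have hnum : b.num ^ q = a := by
    simpa only [Rat.num_pow, Rat.num_natCast] using congrArg Rat.num h
  exact Nat.pow_ne_of_one_lt_of_lt_two_pow h₁ h₂ b.num.natAbs
    (by simpa using congrArg Int.natAbs hnum)

theorem PadicInt.exists_pow_eq_of_norm_sub_one_lt {p : ℕ} [Fact p.Prime] {q : ℕ}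
    (hpq : p.Coprime q) {a : ℤ_[p]} (ha : ‖a - 1‖ < 1) : ∃ z : ℤ_[p], z ^ q = a := by
  have hnorm : ‖(X ^ q - C a).aeval (1 : ℤ_[p])‖ <
      ‖(derivative (X ^ q - C a)).aeval (1 : ℤ_[p])‖ ^ 2 := by
    simpa [derivative_X_pow, norm_sub_rev, PadicInt.norm_natCast_eq_one_iff.2 hpq] using ha
  obtain ⟨z, hz, -⟩ := hensels_lemma hnorm
  exact ⟨z, sub_eq_zero.mp (by simpa using hz)⟩

theorem Padic.exists_isIntegral_lt_natDegree_minpoly (p : ℕ) [hp : Fact p.Prime] (N : ℕ) :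
    ∃ t : ℚ_[p], IsIntegral ℚ t ∧ N < (minpoly ℚ t).natDegree := by
  obtain ⟨q, hq_ge, hq⟩ := Nat.exists_infinite_primes (max (N + 1) (p + 1))
  have hpq : p.Coprime q := (Nat.coprime_primes hp.out hq).2 (by omega)
  obtain ⟨z, hz⟩ := PadicInt.exists_pow_eq_of_norm_sub_one_lt hpq (a := 1 + p)
    (by simpa using Padic.norm_p_lt_one (p := p))
  have hmin : X ^ q - C ((1 + p : ℕ) : ℚ) = minpoly ℚ (z : ℚ_[p]) := by
    refine minpoly.eq_of_irreducible_of_monic ?_ ?_ (monic_X_pow_sub_C _ hq.ne_zero)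
    · refine X_pow_sub_C_irreducible_of_prime hq
        (Rat.pow_ne_natCast_of_one_lt_of_lt_two_pow ?_ ?_)
      · have := hp.out.pos; omega
      · have := @Nat.lt_two_pow_self q; omega
    · simp [← PadicInt.coe_pow, hz]
  refine ⟨z, minpoly.ne_zero_iff.mp (hmin ▸ (monic_X_pow_sub_C _ hq.ne_zero).ne_zero), ?_⟩
  rw [← hmin, natDegree_X_pow_sub_C]
  omega

theorem natDegree_minpoly_le_finrank_mul {F L E : Type*} [Field F] [Field L] [Field E]
    [Algebra F L] [Algebra L E] [Algebra F E] [IsScalarTower F L E] [FiniteDimensional F L]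
    (t : E) : (minpoly F t).natDegree ≤ finrank F L * (minpoly L t).natDegree := by
  by_cases ht : IsIntegral F t
  swap
  · simp [minpoly.eq_zero ht]
  have htL : IsIntegral L t := ht.tower_top
  have : FiniteDimensional L L⟮t⟯ := IntermediateField.adjoin.finiteDimensional htL
  have : FiniteDimensional F L⟮t⟯ := FiniteDimensional.trans F L L⟮t⟯
  have : IsScalarTower F L⟮t⟯ E := IsScalarTower.to₁₃₄ F L L⟮t⟯ E
  calc (minpoly F t).natDegree
      = (minpoly F (⟨t, IntermediateField.mem_adjoin_simple_self L t⟩ : L⟮t⟯)).natDegree := by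
        rw [← minpoly.algebraMap_eq (algebraMap L⟮t⟯ E).injective]; rfl
    _ ≤ finrank F L⟮t⟯ := minpoly.natDegree_le _
    _ = finrank F L * (minpoly L t).natDegree := by
        rw [← Module.finrank_mul_finrank F L L⟮t⟯, IntermediateField.adjoin.finrank htL]

theorem linearIndependent_pow_of_finrank_mul_lt {F L E : Type*} [Field F] [Field L] [Field E]
    [Algebra F L] [Algebra L E] [Algebra F E] [IsScalarTower F L E] [FiniteDimensional F L]
    {t : E} {n : ℕ} (h : finrank F L * n < (minpoly F t).natDegree) :
    LinearIndependent L fun j : Fin n => t ^ (j : ℕ) := by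
  have hn : n ≤ (minpoly L t).natDegree :=
    (Nat.lt_of_mul_lt_mul_left (h.trans_le (natDegree_minpoly_le_finrank_mul t))).le
  exact (linearIndependent_pow t).comp (Fin.castLE hn) (Fin.castLE_injective hn)

section RationalStructure

variable (F K : Type*) [Field F] [Field K] [Algebra F K] {ι : Type*} [Fintype ι]

/-- The subspaces of `K^ι` defined over `F` are exactly the `rationalSpan F K t`. -/
def rationalSpan (t : Set (ι → F)) : Submodule K (ι → K) :=
  Submodule.span K ((fun f i => algebraMap F K (f i)) '' t)

variable {F} in
def rationalForm (c : ι → F) : (ι → K) →ₗ[K] K := ∑ i, c i • LinearMap.proj i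

variable {F K}

@[simp]
theorem rationalForm_apply (c : ι → F) (x : ι → K) : rationalForm K c x = ∑ i, c i • x i := by
  simp [rationalForm]

theorem rationalSpan_ker_rationalForm_le (c : ι → F) :
    rationalSpan F K (LinearMap.ker (rationalForm F c)) ≤ LinearMap.ker (rationalForm K c) := by
  refine Submodule.span_le.2 ?_
  rintro _ ⟨f, hf, rfl⟩
  simpa [Algebra.smul_def, ← map_mul, ← map_sum] using congrArg (algebraMap F K) hf

theorem ker_rationalForm_le_rationalSpan [DecidableEq ι] {c : ι → F} {i₀ : ι} (hi₀ : c i₀ ≠ 0) :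
    LinearMap.ker (rationalForm K c) ≤ rationalSpan F K (LinearMap.ker (rationalForm F c)) := by
  intro x hx
  let g : ι → ι → F := fun i => Pi.single i 1 - (c i / c i₀) • Pi.single i₀ 1
  have hg : ∀ i, g i ∈ LinearMap.ker (rationalForm F c) := by
    intro i
    simp [g, Pi.single_apply, mul_sub, Finset.sum_sub_distrib, mul_div_cancel₀ _ hi₀]
  have hx_eq : x = ∑ i, x i • fun k => algebraMap F K (g i k) := by
    have hx' : ∑ i, x i * algebraMap F K (c i) = 0 := by
      simpa [Algebra.smul_def, mul_comm] using hx
    ext k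
    by_cases hk : k = i₀
    · subst hk
      simp [g, Pi.single_apply, mul_sub, Finset.sum_sub_distrib, ← Finset.sum_mul,
        div_eq_mul_inv, ← mul_assoc, hx']
    · simp [g, Pi.single_apply, hk]
  rw [hx_eq]
  exact Submodule.sum_mem _ fun i _ =>
    Submodule.smul_mem _ _ (Submodule.subset_span ⟨g i, hg i, rfl⟩)

theorem eq_zero_of_le_ker_rationalForm {V : Submodule K (ι → K)}
    (hV : ∀ t : Set (ι → F), V ≤ rationalSpan F K t → rationalSpan F K t = ⊤) {c : ι → F}
    (hc : V ≤ LinearMap.ker (rationalForm K c)) : c = 0 := by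
  classical
  by_contra hc₀
  obtain ⟨i₀, hi₀⟩ := Function.ne_iff.1 hc₀
  have htop := hV _ (hc.trans (ker_rationalForm_le_rationalSpan hi₀))
  have hsingle := rationalSpan_ker_rationalForm_le (K := K) c
    (htop ▸ Submodule.mem_top (x := Pi.single i₀ 1))
  simp [Pi.single_apply] at hsingle
  exact hi₀ hsingle

end RationalStructure

theorem rationalForm_eq_zero_of_rationalForm_sum_pow_smul {F E ι : Type*} [Field F]
    [Field E] [Algebra F E] [Fintype ι] (L : IntermediateField F E) [FiniteDimensional F L]
    {n : ℕ} {u : Fin n → ι → E} (hu : ∀ j i, u j i ∈ L) {t : E}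
    (ht : finrank F L * n < (minpoly F t).natDegree) {c : ι → F}
    (hc : rationalForm E c (∑ j : Fin n, t ^ (j : ℕ) • u j : ι → E) = 0) (j : Fin n) :
    rationalForm E c (u j) = 0 := by
  have hmem : ∀ j, rationalForm E c (u j) ∈ L := fun j => by
    simpa using sum_mem fun i _ => L.smul_mem (hu j i)
  let γ : Fin n → L := fun j => ⟨_, hmem j⟩
  have hrel : ∑ j : Fin n, γ j • t ^ (j : ℕ) = 0 := by
    simpa only [map_sum, map_smul, smul_eq_mul, IntermediateField.smul_def, mul_comm] using hc
  have h := linearIndependent_pow_of_finrank_mul_lt (L := L) ht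
  exact congrArg Subtype.val (Fintype.linearIndependent_iff.1 h γ hrel j)

theorem Submodule.exists_fin_subset_span_eq {R M : Type*} [Semiring R] [AddCommMonoid M]
    [Module R M] [IsNoetherian R M] (s : Set M) :
    ∃ (n : ℕ) (u : Fin n → M), Set.range u ⊆ s ∧ span R (Set.range u) = span R s := by
  obtain ⟨s', hs's, hs'⟩ :=
    (fg_span_iff_fg_span_finset_subset s).1 (IsNoetherian.noetherian (span R s))
  obtain ⟨n, u, -, hu⟩ := s'.finite_toSet.fin_param
  exact ⟨n, u, hu ▸ hs's, hu ▸ hs'.symm⟩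

/-- If `V ⊆ ℚ_p^l` is spanned by vectors with coordinates algebraic over `ℚ` and is not
contained in any proper subspace defined over `ℚ`, then there is `w ∈ V` with algebraic
coordinates that are linearly independent over `ℚ`. -/
theorem stmt2 (p : ℕ) [Fact p.Prime] (l : ℕ) (V : Submodule ℚ_[p] (Fin l → ℚ_[p]))
    (hspan : ∃ s : Set (Fin l → ℚ_[p]), (∀ v ∈ s, ∀ i, IsAlgebraic ℚ (v i)) ∧
      V = Submodule.span ℚ_[p] s)
    (hirr : ∀ W : Submodule ℚ_[p] (Fin l → ℚ_[p]),
      (∃ t : Set (Fin l → ℚ),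
        W = Submodule.span ℚ_[p] ((fun f : Fin l → ℚ => fun i => ((f i : ℚ_[p]))) '' t)) →
      V ≤ W → W = ⊤) :
    ∃ w ∈ V, (∀ i, IsAlgebraic ℚ (w i)) ∧ LinearIndependent ℚ w := by
  obtain ⟨s, hs_alg, rfl⟩ := hspan
  obtain ⟨n, u, hu_s, hu_span⟩ := Submodule.exists_fin_subset_span_eq (R := ℚ_[p]) s
  have hu_int : ∀ j i, IsIntegral ℚ (u j i) := fun j i =>
    (hs_alg _ (hu_s ⟨j, rfl⟩) i).isIntegral
  let L := IntermediateField.adjoin ℚ (Set.range fun ji : Fin n × Fin l => u ji.1 ji.2)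
  have : FiniteDimensional ℚ L := IntermediateField.finiteDimensional_adjoin <| by
    rintro _ ⟨ji, rfl⟩; exact hu_int _ _
  have hu_L : ∀ j i, u j i ∈ L := fun j i => IntermediateField.subset_adjoin _ _ ⟨(j, i), rfl⟩
  obtain ⟨t, ht_int, ht_deg⟩ := Padic.exists_isIntegral_lt_natDegree_minpoly p (finrank ℚ L * n)
  refine ⟨∑ j : Fin n, t ^ (j : ℕ) • u j, ?_, fun i => ?_,
    Fintype.linearIndependent_iff.2 fun c hc => ?_⟩
  · exact Submodule.sum_mem _ fun j _ =>
      Submodule.smul_mem _ _ (Submodule.subset_span (hu_s ⟨j, rfl⟩))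
  · simpa using (IsIntegral.sum _ fun j _ => (ht_int.pow _).mul (hu_int j i)).isAlgebraic
  · have hc_u := rationalForm_eq_zero_of_rationalForm_sum_pow_smul L hu_L ht_deg
      (c := c) ((rationalForm_apply c _).trans hc)
    have := eq_zero_of_le_ker_rationalForm (fun t h => hirr _ ⟨t, rfl⟩ h)
      (hu_span ▸ Submodule.span_le.2 (Set.range_subset_iff.2 hc_u))
    exact congrFun this
end

section
/- Let A, B, C ∈ GL(d, ℚ) be commuting semisimple matrices. Call a matrix T 'ergodic' if no power T^r (r ≥ 1) has a nonzero fixed vector in ℚ^d. Suppose A^i B^j is ergodic for all integer pairs (i, j) ≠ (0, 0). Then there are at most finitely many primitive integer triples (k, l, m) ∈ ℤ^3 (triples with gcd(k, l, m) = 1) such that A^k B^l C^m is not ergodic. -/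
/-- A matrix (given as an element of `GL(d, ℚ)`) is "ergodic" if no positive power of it
fixes a nonzero rational vector. -/
def MatErgodic {d : ℕ} (T : GL (Fin d) ℚ) : Prop :=
  ∀ r : ℕ, 1 ≤ r → ∀ v : Fin d → ℚ,
    ((T ^ r : GL (Fin d) ℚ) : Matrix (Fin d) (Fin d) ℚ).mulVec v = v → v = 0

/-!
Write `ρ(k, l, m) = A^k B^l C^m`. A bad primitive triple `t` has nonzero `C`-exponent (otherwise
`ρ t = A^k B^l` is ergodic), so up to sign it is positive; choose `r ≥ 1` such that `ρ t ^ r`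
has a nonzero fixed space `V_t`. For two distinct bad triples `t, t'` with positive `C`-exponents
`m, m'`, a vector in `V_t ∩ V_t'` is fixed by `ρ (r r' (m' t - m t'))`, which has no `C`-part
and is nontrivial by primitivity, so it is ergodic and `V_t ∩ V_t' = 0`. The operators `ρ t ^ r`
commute, and fixed spaces of commuting operators meeting pairwise trivially are independent
(apply `ρ t ^ r - 1`, which preserves every fixed space and kills `V_t`, and induct). Hence there
are at most `d` such triples up to sign.
-/

open LinearMap

namespace Module.End

section

variable {R M : Type*} [Ring R] [AddCommGroup M] [Module R M]

lemma ker_mem_invtSubmodule_of_commute {f g : End R M} (h : Commute f g) :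
    ker f ∈ g.invtSubmodule := fun x hx => by
  simp only [Submodule.mem_comap, mem_ker] at hx ⊢
  rw [← mul_apply, h.eq, mul_apply, hx, map_zero]

variable {ι : Type*} {f : ι → End R M}

lemma disjoint_ker_finsetSup_ker (hcomm : Pairwise fun i j => Commute (f i) (f j))
    (hdisj : Pairwise fun i j => Disjoint (ker (f i)) (ker (f j))) {i : ι} {s : Finset ι}
    (hi : i ∉ s) : Disjoint (ker (f i)) (s.sup fun j => ker (f j)) := by
  classical
  induction s using Finset.induction_on with
  | empty => simp
  | insert j s hj ih =>
    obtain ⟨hij, his⟩ : i ≠ j ∧ i ∉ s := by simpa [not_or] using hi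
    have hs_inv : (s.sup fun k => ker (f k)) ∈ (f j).invtSubmodule :=
      Finset.sup_induction (invtSubmodule.bot_mem _)
        (fun _ h₁ _ h₂ => invtSubmodule.sup_mem h₁ h₂) fun k hk =>
          ker_mem_invtSubmodule_of_commute (hcomm (ne_of_mem_of_not_mem hk hj))
    rw [Submodule.disjoint_def]
    intro x hxi hx
    rw [Finset.sup_insert, Submodule.mem_sup] at hx
    obtain ⟨y, hy, z, hz, rfl⟩ := hx
    -- `f j` kills `y` and preserves `ker (f i)` and the other kernels, so `f j z` lies in both
    have hfz : f j z = 0 := by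
      refine Submodule.disjoint_def.mp (ih his) _ ?_ (hs_inv hz)
      simpa [mem_ker.mp hy] using ker_mem_invtSubmodule_of_commute (hcomm hij) hxi
    exact Submodule.disjoint_def.mp (hdisj hij) _ hxi (add_mem hy hfz)

theorem iSupIndep_ker_of_pairwise_commute (hcomm : Pairwise fun i j => Commute (f i) (f j))
    (hdisj : Pairwise fun i j => Disjoint (ker (f i)) (ker (f j))) :
    iSupIndep fun i => ker (f i) := by
  classical
  rw [iSupIndep_iff_supIndep]
  intro s
  rw [Finset.supIndep_iff_disjoint_erase]
  exact fun i _ => disjoint_ker_finsetSup_ker hcomm hdisj (Finset.notMem_erase i s)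

end

theorem finite_of_pairwise_commute_of_ker_ne_bot {ι K V : Type*} [DivisionRing K]
    [AddCommGroup V] [Module K V] [FiniteDimensional K V] {f : ι → End K V}
    (hcomm : Pairwise fun i j => Commute (f i) (f j))
    (hdisj : Pairwise fun i j => Disjoint (ker (f i)) (ker (f j)))
    (hne : ∀ i, ker (f i) ≠ ⊥) : Finite ι := by
  choose v hv hv0 using fun i => (Submodule.ne_bot_iff _).mp (hne i)
  exact ((iSupIndep_ker_of_pairwise_commute hcomm hdisj).linearIndependent _ hv hv0).finite

end Module.End

section ZPowTriple

variable {G : Type*} [Group G] {a b c : G}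

def zpowTriple (a b c : G) (t : ℤ × ℤ × ℤ) : G := a ^ t.1 * b ^ t.2.1 * c ^ t.2.2

lemma zpowTriple_add (hab : Commute a b) (hac : Commute a c) (hbc : Commute b c)
    (s t : ℤ × ℤ × ℤ) :
    zpowTriple a b c (s + t) = zpowTriple a b c s * zpowTriple a b c t := by
  simp only [zpowTriple, Prod.fst_add, Prod.snd_add, zpow_add]
  rw [((hac.zpow_zpow t.1 s.2.2).symm.mul_right
      (hbc.zpow_zpow t.2.1 s.2.2).symm).mul_mul_mul_comm,
    (hab.zpow_zpow t.1 s.2.1).symm.mul_mul_mul_comm]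

lemma zpowTriple_zsmul (hab : Commute a b) (hac : Commute a c) (hbc : Commute b c)
    (n : ℤ) (t : ℤ × ℤ × ℤ) : zpowTriple a b c (n • t) = zpowTriple a b c t ^ n := by
  simp only [zpowTriple, Prod.smul_fst, Prod.smul_snd, smul_eq_mul]
  rw [((hac.zpow_zpow _ _).mul_left (hbc.zpow_zpow _ _)).mul_zpow, (hab.zpow_zpow _ _).mul_zpow]
  simp only [← zpow_mul, mul_comm n]

lemma zpowTriple_neg (hab : Commute a b) (hac : Commute a c) (hbc : Commute b c)
    (t : ℤ × ℤ × ℤ) : zpowTriple a b c (-t) = (zpowTriple a b c t)⁻¹ := by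
  rw [← neg_one_zsmul, zpowTriple_zsmul hab hac hbc, zpow_neg_one]

lemma commute_zpowTriple (hab : Commute a b) (hac : Commute a c) (hbc : Commute b c)
    (s t : ℤ × ℤ × ℤ) : Commute (zpowTriple a b c s) (zpowTriple a b c t) := by
  rw [Commute, SemiconjBy, ← zpowTriple_add hab hac hbc, ← zpowTriple_add hab hac hbc, add_comm]

end ZPowTriple

section FixedSubspace

variable {n R : Type*} [Fintype n] [DecidableEq n] [CommRing R]

def fixedSubspace (g : GL n R) : Submodule R (n → R) :=
  ker (Matrix.toLin' (g : Matrix n n R) - 1)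

lemma mem_fixedSubspace {g : GL n R} {v : n → R} : v ∈ fixedSubspace g ↔ g • v = v := by
  rw [fixedSubspace, mem_ker, LinearMap.sub_apply, Matrix.toLin'_apply, Module.End.one_apply,
    sub_eq_zero]
  rfl

lemma inf_fixedSubspace_le_zpow_mul_zpow (g h : GL n R) (x y : ℤ) :
    fixedSubspace g ⊓ fixedSubspace h ≤ fixedSubspace (g ^ x * h ^ y) := by
  rintro v ⟨hg, hh⟩
  rw [SetLike.mem_coe, mem_fixedSubspace] at hg hh
  rw [mem_fixedSubspace, ← MulAction.mem_stabilizer_iff]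
  exact mul_mem (zpow_mem hg x) (zpow_mem hh y)

lemma fixedSubspace_inv (g : GL n R) : fixedSubspace g⁻¹ = fixedSubspace g := by
  ext v
  rw [mem_fixedSubspace, mem_fixedSubspace, inv_smul_eq_iff, eq_comm]

lemma commute_toLin'_sub_one {g h : GL n R} (hgh : Commute g h) :
    Commute (Matrix.toLin' (g : Matrix n n R) - 1) (Matrix.toLin' (h : Matrix n n R) - 1) :=
  ((hgh.map (Units.coeHom _)).map Matrix.toLinAlgEquiv').sub_left (.one_left _) |>.sub_right
    (.one_right _)

end FixedSubspace

variable {d : ℕ}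

lemma matErgodic_iff {T : GL (Fin d) ℚ} :
    MatErgodic T ↔ ∀ r, 1 ≤ r → fixedSubspace (T ^ r) = ⊥ := by
  simp only [Submodule.eq_bot_iff, mem_fixedSubspace]
  rfl

lemma matErgodic_inv_iff {T : GL (Fin d) ℚ} : MatErgodic T⁻¹ ↔ MatErgodic T := by
  simp only [matErgodic_iff, inv_pow, fixedSubspace_inv]

lemma Int.gcd_gcd_mul_left (a k l m : ℤ) :
    Int.gcd (Int.gcd (a * k) (a * l)) (a * m) = a.natAbs * Int.gcd (Int.gcd k l) m := by
  simp [Int.gcd, Int.natAbs_mul, Int.natAbs_abs, Nat.gcd_mul_left]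

lemma eq_of_smul_eq_smul_of_gcd_eq_one {t t' : ℤ × ℤ × ℤ}
    (ht : Int.gcd (Int.gcd t.1 t.2.1) t.2.2 = 1) (ht' : Int.gcd (Int.gcd t'.1 t'.2.1) t'.2.2 = 1)
    (hm : 0 < t.2.2) (hm' : 0 < t'.2.2) (h : t'.2.2 • t = t.2.2 • t') : t = t' := by
  have hgcd := congrArg (fun u : ℤ × ℤ × ℤ => Int.gcd (Int.gcd u.1 u.2.1) u.2.2) h
  simp only [Prod.smul_fst, Prod.smul_snd, smul_eq_mul, Int.gcd_gcd_mul_left, ht, ht'] at hgcd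
  have hmm : t'.2.2 = t.2.2 := by omega
  rw [hmm] at h
  exact smul_right_injective _ hm.ne' h

section Triples

variable {A B C : GL (Fin d) ℚ}
  (herg : ∀ i j : ℤ, (i, j) ≠ (0, 0) → MatErgodic (A ^ i * B ^ j))
include herg

lemma third_ne_zero_of_not_matErgodic {t : ℤ × ℤ × ℤ}
    (ht : Int.gcd (Int.gcd t.1 t.2.1) t.2.2 = 1) (hbad : ¬ MatErgodic (zpowTriple A B C t)) :
    t.2.2 ≠ 0 := by
  obtain ⟨k, l, m⟩ := t
  rintro (rfl : m = 0)
  have hkl : (k, l) ≠ (0, 0) := by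
    rintro ⟨⟩
    simp at ht
  exact hbad (by simpa [zpowTriple] using herg k l hkl)

variable (hAB : Commute A B) (hAC : Commute A C) (hBC : Commute B C)
include hAB hAC hBC

lemma disjoint_fixedSubspace_zpowTriple {u u' : ℤ × ℤ × ℤ}
    (h : u'.2.2 • u - u.2.2 • u' ≠ 0) :
    Disjoint (fixedSubspace (zpowTriple A B C u)) (fixedSubspace (zpowTriple A B C u')) := by
  have hw : zpowTriple A B C (u'.2.2 • u - u.2.2 • u') =
      zpowTriple A B C u ^ u'.2.2 * zpowTriple A B C u' ^ (-u.2.2) := by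
    rw [sub_eq_add_neg, ← neg_smul, zpowTriple_add hAB hAC hBC, zpowTriple_zsmul hAB hAC hBC,
      zpowTriple_zsmul hAB hAC hBC]
  obtain ⟨i, j, hw0⟩ : ∃ i j, u'.2.2 • u - u.2.2 • u' = (i, j, 0) :=
    ⟨_, _, Prod.ext rfl (Prod.ext rfl (by simp [mul_comm]))⟩
  have hij : (i, j) ≠ (0, 0) := by
    rintro ⟨⟩
    exact h hw0
  rw [disjoint_iff, ← le_bot_iff]
  calc _ ≤ fixedSubspace (zpowTriple A B C (u'.2.2 • u - u.2.2 • u')) :=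
        hw ▸ inf_fixedSubspace_le_zpow_mul_zpow _ _ _ _
    _ = fixedSubspace (A ^ i * B ^ j) := by rw [hw0, zpowTriple, zpow_zero, mul_one]
    _ = ⊥ := by simpa using matErgodic_iff.mp (herg i j hij) 1 le_rfl

lemma disjoint_fixedSubspace_zpowTriple_zpow {t t' : ℤ × ℤ × ℤ}
    (ht : Int.gcd (Int.gcd t.1 t.2.1) t.2.2 = 1) (ht' : Int.gcd (Int.gcd t'.1 t'.2.1) t'.2.2 = 1)
    (hm : 0 < t.2.2) (hm' : 0 < t'.2.2) (hne : t ≠ t') {r r' : ℤ} (hr : r ≠ 0)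
    (hr' : r' ≠ 0) :
    Disjoint (fixedSubspace (zpowTriple A B C t ^ r))
      (fixedSubspace (zpowTriple A B C t' ^ r')) := by
  rw [← zpowTriple_zsmul hAB hAC hBC, ← zpowTriple_zsmul hAB hAC hBC]
  refine disjoint_fixedSubspace_zpowTriple herg hAB hAC hBC ?_
  have hsub : t'.2.2 • t - t.2.2 • t' ≠ 0 :=
    sub_ne_zero.mpr fun h => hne (eq_of_smul_eq_smul_of_gcd_eq_one ht ht' hm hm' h)
  convert smul_ne_zero (mul_ne_zero hr hr') hsub using 1
  simp only [Prod.smul_snd, smul_eq_mul, smul_sub, smul_smul]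
  congr 1 <;> congr 1 <;> ring

lemma finite_setOf_gcd_eq_one_not_matErgodic_pos :
    {t : ℤ × ℤ × ℤ | Int.gcd (Int.gcd t.1 t.2.1) t.2.2 = 1 ∧
      ¬ MatErgodic (zpowTriple A B C t) ∧ 0 < t.2.2}.Finite := by
  let P := {t : ℤ × ℤ × ℤ | Int.gcd (Int.gcd t.1 t.2.1) t.2.2 = 1 ∧
      ¬ MatErgodic (zpowTriple A B C t) ∧ 0 < t.2.2}
  have hpow : ∀ t : P, ∃ r : ℕ, 1 ≤ r ∧
      fixedSubspace (zpowTriple A B C t ^ (r : ℤ)) ≠ ⊥ := by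
    rintro ⟨t, -, hbad, -⟩
    simpa [matErgodic_iff] using hbad
  choose r hr hfix using hpow
  have hr0 : ∀ t, (r t : ℤ) ≠ 0 := fun t => by have := hr t; omega
  have : Finite P := Module.End.finite_of_pairwise_commute_of_ker_ne_bot
    (f := fun t => Matrix.toLin'
      ((zpowTriple A B C t ^ (r t : ℤ) : GL (Fin d) ℚ) : Matrix (Fin d) (Fin d) ℚ) - 1)
    (fun _ _ _ =>
      commute_toLin'_sub_one ((commute_zpowTriple hAB hAC hBC _ _).zpow_zpow _ _))
    (fun s t hst => disjoint_fixedSubspace_zpowTriple_zpow herg hAB hAC hBC s.2.1 t.2.1 s.2.2.2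
      t.2.2.2 (Subtype.coe_ne_coe.mpr hst) (hr0 s) (hr0 t))
    hfix
  exact Set.toFinite P

end Triples

theorem stmt5_general {d : ℕ} (A B C : GL (Fin d) ℚ)
    (hAB : A * B = B * A) (hAC : A * C = C * A) (hBC : B * C = C * B)
    (herg : ∀ i j : ℤ, (i, j) ≠ (0, 0) → MatErgodic (A ^ i * B ^ j)) :
    {t : ℤ × ℤ × ℤ | Int.gcd (Int.gcd t.1 t.2.1) t.2.2 = 1 ∧
      ¬ MatErgodic (A ^ t.1 * B ^ t.2.1 * C ^ t.2.2)}.Finite := by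
  have hP := finite_setOf_gcd_eq_one_not_matErgodic_pos herg hAB hAC hBC
  refine (hP.union (hP.preimage neg_injective.injOn)).subset ?_
  rintro t ⟨ht, hbad : ¬ MatErgodic (zpowTriple A B C t)⟩
  rcases (third_ne_zero_of_not_matErgodic herg ht hbad).lt_or_gt with hneg | hpos
  · refine Or.inr ⟨by simpa using ht, ?_, neg_pos.mpr hneg⟩
    rwa [zpowTriple_neg hAB hAC hBC, matErgodic_inv_iff]
  · exact Or.inl ⟨ht, hbad, hpos⟩

/-- Let `A, B, C ∈ GL(d, ℚ)` be commuting semisimple matrices, and suppose `A^i B^j` is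
ergodic for all `(i, j) ≠ (0, 0)`. Then there are at most finitely many primitive integer
triples `(k, l, m)` such that `A^k B^l C^m` is not ergodic. -/
theorem stmt5 {d : ℕ} (A B C : GL (Fin d) ℚ)
    (hAB : A * B = B * A) (hAC : A * C = C * A) (hBC : B * C = C * B)
    (hAs : Module.End.IsSemisimple (Matrix.toLin' (A : Matrix (Fin d) (Fin d) ℚ)))
    (hBs : Module.End.IsSemisimple (Matrix.toLin' (B : Matrix (Fin d) (Fin d) ℚ)))
    (hCs : Module.End.IsSemisimple (Matrix.toLin' (C : Matrix (Fin d) (Fin d) ℚ)))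
    (herg : ∀ i j : ℤ, (i, j) ≠ (0, 0) → MatErgodic (A ^ i * B ^ j)) :
    {t : ℤ × ℤ × ℤ | Int.gcd (Int.gcd t.1 t.2.1) t.2.2 = 1 ∧
      ¬ MatErgodic (A ^ t.1 * B ^ t.2.1 * C ^ t.2.2)}.Finite :=
  stmt5_general A B C hAB hAC hBC herg
end

section
/- Let ρ : ℤ^k → GL(d, ℚ) be a group homomorphism (k ≥ 1) such that every ρ(a) with a ≠ 0 is ergodic in the sense that no eigenvalue of ρ(a) is a root of unity. Then there exists a constant c > 0 such that for every nonzero a ∈ ℤ^k, the maximum over all eigenvalues λ of ρ(a) (in an algebraic closure) and over all places v (archimedean or finite) of the number field generated by the eigenvalues, of |log |λ|_v|, is at least c. In particular inf_{a ∈ ℤ^k, a ≠ 0} S(a) > 0, where S(a) = max over Lyapunov exponents χ of |χ(a)|. -/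
open IsDedekindDomain
open scoped Multiplicative

theorem aux_le_of_count_le {α : Type*} [CommMonoidWithZero α] [IsCancelMulZero α] [UniqueFactorizationMonoid α]
    [DecidableEq (Associates α)] [∀ p : Associates α, Decidable (Irreducible p)]
    {a b : Associates α} (ha : a ≠ 0) (hb : b ≠ 0)
    (h : ∀ p : Associates α, Irreducible p → p.count a.factors ≤ p.count b.factors) : a ≤ b := by
  obtain ⟨sa, hsa⟩ := Associates.factors_eq_some_iff_ne_zero.mpr ha
  obtain ⟨sb, hsb⟩ := Associates.factors_eq_some_iff_ne_zero.mpr hb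
  rw [← Associates.factors_le, hsa, hsb, WithTop.coe_le_coe, Multiset.le_iff_count]
  rintro ⟨p, hp⟩
  have hc := h p hp
  rwa [hsa, hsb, Associates.count_some hp, Associates.count_some hp] at hc

theorem aux_exists_int {R : Type*} [CommRing R] [IsDedekindDomain R] {K : Type*} [Field K]
    [Algebra R K] [IsFractionRing R K] {x : K} (hx : x ≠ 0)
    (h : ∀ v : HeightOneSpectrum R, v.valuation K x ≤ 1) :
    ∃ r : R, algebraMap R K r = x := by
  classical
  obtain ⟨⟨r, s⟩, hrs : IsLocalization.mk' K r s = x⟩ := IsLocalization.mk'_surjective (nonZeroDivisors R) x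
  have hr0 : r ≠ 0 := by
    rintro rfl
    rw [IsLocalization.mk'_zero] at hrs
    exact hx hrs.symm
  have hs0 : (s : R) ≠ 0 := nonZeroDivisors.coe_ne_zero s
  have hspanr : (Ideal.span {r} : Ideal R) ≠ 0 := by
    simpa [Ideal.span_singleton_eq_bot, Ideal.zero_eq_bot] using hr0
  have hspans : (Ideal.span {(s : R)} : Ideal R) ≠ 0 := by
    simpa [Ideal.span_singleton_eq_bot, Ideal.zero_eq_bot] using hs0
  have hcount : ∀ v : HeightOneSpectrum R,
      (Associates.mk v.asIdeal).count (Associates.mk (Ideal.span {(s : R)})).factors ≤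
      (Associates.mk v.asIdeal).count (Associates.mk (Ideal.span {r})).factors := by
    intro v
    have h1 := h v
    rw [← hrs, v.valuation_of_mk'] at h1
    have hspos : (0 : WithZero (Multiplicative ℤ)) < v.intValuation (s : R) := v.intValuation_zero_lt s
    rw [div_le_one₀ hspos] at h1
    rw [IsDedekindDomain.HeightOneSpectrum.intValuation_apply,
      IsDedekindDomain.HeightOneSpectrum.intValuation_apply,
      v.intValuationDef_if_neg hr0, v.intValuationDef_if_neg hs0,
      WithZero.exp_le_exp, neg_le_neg_iff, Int.ofNat_le] at h1
    exact h1
  have hdvd : Ideal.span {(s : R)} ∣ Ideal.span {r} := by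
    rw [← Associates.mk_le_mk_iff_dvd]
    refine aux_le_of_count_le (by simpa using hspans) (by simpa using hspanr) ?_
    intro p hp
    obtain ⟨I, rfl⟩ := Associates.mk_surjective p
    have hIirr : Irreducible I := by rwa [Associates.irreducible_mk] at hp
    have hIprime : Prime I := UniqueFactorizationMonoid.irreducible_iff_prime.mp hIirr
    have v : HeightOneSpectrum R :=
      ⟨I, Ideal.isPrime_of_prime hIprime, hIprime.ne_zero⟩
    exact hcount ⟨I, Ideal.isPrime_of_prime hIprime, hIprime.ne_zero⟩
  have hsr : (s : R) ∣ r := by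
    have := Ideal.le_of_dvd hdvd
    exact Ideal.mem_span_singleton.mp (this (Ideal.mem_span_singleton_self r))
  obtain ⟨t, rfl⟩ := hsr
  refine ⟨t, ?_⟩
  rw [← hrs, eq_comm, IsLocalization.mk'_eq_iff_eq_mul, map_mul, mul_comm]


/-- Lemma 3.11: let `ρ : ℤ^k → GL(d, ℚ)` be a homomorphism such that no eigenvalue of any
`ρ(a)`, `a ≠ 0`, is a root of unity, and let `K` be a number field splitting all the
characteristic polynomials (the field generated by the eigenvalues).  Then there is a
uniform `c > 0` such that for every `a ≠ 0` some eigenvalue `λ` of `ρ(a)` in `K` satisfies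
`|log |λ|_v| ≥ c` at some place `v` of `K`: either an infinite place with
`|log (v λ)| ≥ c`, or a finite place (height-one prime) at which `λ` is not a unit.
In particular `inf_{a ≠ 0} S(a) > 0` for `S(a) = max_χ |χ(a)|` over Lyapunov exponents. -/
theorem stmt6 {k d : ℕ} (hk : 1 ≤ k) (hd : 0 < d)
    (ρ : (Fin k → ℤ) → GL (Fin d) ℚ)
    (hρ : ∀ a b, ρ (a + b) = ρ a * ρ b)
    (K : Type*) [Field K] [NumberField K]
    (hsplit : ∀ a, Polynomial.Splits
      ((Matrix.charpoly ((ρ a : Matrix (Fin d) (Fin d) ℚ))).map (algebraMap ℚ K)))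
    (herg : ∀ a : Fin k → ℤ, a ≠ 0 → ∀ lam : K,
      Polynomial.aeval lam (Matrix.charpoly ((ρ a : Matrix (Fin d) (Fin d) ℚ))) = 0 →
      ∀ n : ℕ, 0 < n → lam ^ n ≠ 1) :
    ∃ c > (0 : ℝ), ∀ a : Fin k → ℤ, a ≠ 0 → ∃ lam : K,
      Polynomial.aeval lam (Matrix.charpoly ((ρ a : Matrix (Fin d) (Fin d) ℚ))) = 0 ∧
      ((∃ v : NumberField.InfinitePlace K, c ≤ |Real.log (v lam)|) ∨
        (∃ v : IsDedekindDomain.HeightOneSpectrum (NumberField.RingOfIntegers K),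
          v.valuation K lam ≠ 1)) := by
  classical
  set F : Set K := {x : K | (IsIntegral ℤ x ∧ ∀ φ : K →+* ℂ, ‖φ x‖ ≤ 3) ∧ x ≠ 0 ∧
      ∀ n : ℕ, 0 < n → x ^ n ≠ 1} with hF
  have hFfin : F.Finite :=
    (NumberField.Embeddings.finite_of_norm_le K ℂ 3).subset (fun x hx => hx.1)
  have hne : (Finset.univ : Finset (NumberField.InfinitePlace K)).Nonempty :=
    Finset.univ_nonempty
  set m : K → ℝ :=
    fun x => Finset.univ.sup' hne (fun v : NumberField.InfinitePlace K => |Real.log (v x)|)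
    with hm
  have hmpos : ∀ x ∈ F, 0 < m x := by
    intro x hx
    by_contra hmx
    push_neg at hmx
    have hall : ∀ v : NumberField.InfinitePlace K, v x = 1 := by
      intro v
      have h1 : |Real.log (v x)| ≤ 0 :=
        le_trans (Finset.le_sup' (fun v : NumberField.InfinitePlace K => |Real.log (v x)|)
          (Finset.mem_univ v)) hmx
      have h2 : Real.log (v x) = 0 := abs_eq_zero.mp (le_antisymm h1 (abs_nonneg _))
      have hpos : 0 < v x := NumberField.InfinitePlace.pos_iff.mpr hx.2.1
      rcases Real.log_eq_zero.mp h2 with h | h | h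
      · exact absurd h (ne_of_gt hpos)
      · exact h
      · linarith
    have hnorm : ∀ φ : K →+* ℂ, ‖φ x‖ = 1 := by
      intro φ
      have := hall (NumberField.InfinitePlace.mk φ)
      rwa [NumberField.InfinitePlace.apply] at this
    obtain ⟨n, hn, hxn⟩ := NumberField.Embeddings.pow_eq_one_of_norm_eq_one K ℂ hx.1.1 hnorm
    exact hx.2.2 n hn hxn
  obtain ⟨c, hc0, hc1, hcF⟩ : ∃ c : ℝ, 0 < c ∧ c ≤ 1 ∧ ∀ x ∈ F, c ≤ m x := by
    by_cases hFe : hFfin.toFinset.Nonempty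
    · refine ⟨min 1 (hFfin.toFinset.inf' hFe m), lt_min one_pos ?_, min_le_left _ _, ?_⟩
      · rw [Finset.lt_inf'_iff]
        exact fun x hx => hmpos x (hFfin.mem_toFinset.mp hx)
      · intro x hx
        exact le_trans (min_le_right _ _) (Finset.inf'_le m (hFfin.mem_toFinset.mpr hx))
    · exact ⟨1, one_pos, le_refl _,
        fun x hx => absurd (hFfin.mem_toFinset.mpr hx) (fun h => hFe ⟨x, h⟩)⟩
  refine ⟨c, hc0, ?_⟩
  intro a ha
  set p := Matrix.charpoly ((ρ a : Matrix (Fin d) (Fin d) ℚ)) with hp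
  have hdeg : p.degree ≠ 0 := by
    rw [hp, Matrix.charpoly_degree_eq_dim, Fintype.card_fin]
    exact_mod_cast hd.ne'
  obtain ⟨lam, hlam⟩ : ∃ lam, Polynomial.eval₂ (algebraMap ℚ K) lam p = 0 := by
    obtain ⟨x, hx⟩ := (hsplit a).exists_eval_eq_zero (by rwa [Polynomial.degree_map])
    exact ⟨x, by rwa [Polynomial.eval_map] at hx⟩
  have hroot : Polynomial.aeval lam p = 0 := by rwa [Polynomial.aeval_def]
  have hlam0 : lam ≠ 0 := by
    rintro rfl
    rw [Polynomial.eval₂_at_zero] at hlam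
    have hc0' : p.coeff 0 = 0 := (algebraMap ℚ K).injective (by simpa using hlam)
    have hdet : ((ρ a : Matrix (Fin d) (Fin d) ℚ)).det = 0 := by
      rw [Matrix.det_eq_sign_charpoly_coeff, ← hp, hc0', mul_zero]
    have : IsUnit ((ρ a : Matrix (Fin d) (Fin d) ℚ)).det :=
      (Matrix.isUnit_iff_isUnit_det _).mp (ρ a).isUnit
    rw [hdet] at this
    exact this.ne_zero rfl
  have hergl := herg a ha lam hroot
  by_cases hfinv : ∀ v : IsDedekindDomain.HeightOneSpectrum (NumberField.RingOfIntegers K),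
      v.valuation K lam = 1
  · obtain ⟨t, ht⟩ := aux_exists_int (R := NumberField.RingOfIntegers K) hlam0
      (fun v => le_of_eq (hfinv v))
    have hint : IsIntegral ℤ lam := by
      rw [← ht]
      exact NumberField.RingOfIntegers.isIntegral_coe t
    by_cases hbig : ∀ φ : K →+* ℂ, ‖φ lam‖ ≤ 3
    · have hmem : lam ∈ F := ⟨⟨hint, hbig⟩, hlam0, hergl⟩
      obtain ⟨v, hv, hveq⟩ := Finset.exists_mem_eq_sup' hne
        (fun v : NumberField.InfinitePlace K => |Real.log (v lam)|)
      refine ⟨lam, hroot, Or.inl ⟨v, ?_⟩⟩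
      calc c ≤ m lam := hcF lam hmem
        _ = |Real.log (v lam)| := hveq
    · push_neg at hbig
      obtain ⟨φ, hφ⟩ := hbig
      refine ⟨lam, hroot, Or.inl ⟨NumberField.InfinitePlace.mk φ, ?_⟩⟩
      have h3 : (3 : ℝ) < (NumberField.InfinitePlace.mk φ) lam := by
        rw [NumberField.InfinitePlace.apply]
        exact hφ
      have hlog : 1 ≤ Real.log ((NumberField.InfinitePlace.mk φ) lam) := by
        rw [Real.le_log_iff_exp_le (by linarith)]
        have := Real.exp_one_lt_d9
        linarith
      calc c ≤ 1 := hc1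
        _ ≤ Real.log ((NumberField.InfinitePlace.mk φ) lam) := hlog
        _ ≤ |Real.log ((NumberField.InfinitePlace.mk φ) lam)| := le_abs_self _
  · push_neg at hfinv
    obtain ⟨v, hv⟩ := hfinv
    exact ⟨lam, hroot, Or.inr ⟨v, hv⟩⟩
end

section
/- Let F ⊂ ℤ^3 be a finite set of (bad) primitive triples. Then there exist two ℚ-linearly independent vectors v, w ∈ ℤ^3 such that no nonzero integer combination of v and w is a multiple of an element of F; i.e., there is a rank-2 subgroup of ℤ^3 avoiding all lines through the finitely many bad primitive triples in F. -/
/-- The combinatorial core of Proposition 3.10: given finitely many primitive triples in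
`ℤ^3`, there is a rank-2 subgroup `Σ ≅ ℤ^2` of `ℤ^3` (generated by two linearly
independent vectors) meeting each line `ℤ·t`, `t` in the finite set, only in `0`. -/
theorem stmt16 (F : Finset (Fin 3 → ℤ))
    (hF : ∀ t ∈ F, Int.gcd (Int.gcd (t 0) (t 1)) (t 2) = 1) :
    ∃ v w : Fin 3 → ℤ, LinearIndependent ℤ ![v, w] ∧
      ∀ x ∈ AddSubgroup.closure {v, w},
        (∃ t ∈ F, ∃ n : ℤ, x = n • t) → x = 0 := by
  -- choose N such that t 0 + t 1 * N + t 2 * N^2 ≠ 0 for all t ∈ F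
  have hfin : (⋃ t ∈ F, {N : ℤ | t 0 + t 1 * N + t 2 * N ^ 2 = 0}).Finite := by
    apply Set.Finite.biUnion F.finite_toSet
    intro t ht
    have hne : ¬ (t 0 = 0 ∧ t 1 = 0 ∧ t 2 = 0) := by
      rintro ⟨h0, h1, h2⟩
      have := hF t ht
      simp [h0, h1, h2, Int.gcd] at this
    set p : Polynomial ℤ := Polynomial.C (t 0) + Polynomial.C (t 1) * Polynomial.X
        + Polynomial.C (t 2) * Polynomial.X ^ 2 with hp
    have hpne : p ≠ 0 := by
      intro h
      apply hne
      have c0 : p.coeff 0 = t 0 := by simp [hp]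
      have c1 : p.coeff 1 = t 1 := by
        simp only [hp, Polynomial.coeff_add, Polynomial.coeff_C_mul, Polynomial.coeff_X,
          Polynomial.coeff_X_pow, Polynomial.coeff_C]
        norm_num
      have c2 : p.coeff 2 = t 2 := by
        simp only [hp, Polynomial.coeff_add, Polynomial.coeff_C_mul, Polynomial.coeff_X,
          Polynomial.coeff_X_pow, Polynomial.coeff_C]
        norm_num
      rw [h] at c0 c1 c2
      simp at c0 c1 c2
      exact ⟨c0.symm, c1.symm, c2.symm⟩
    have := Polynomial.finite_setOf_isRoot hpne (p := p)
    refine this.subset ?_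
    intro N hN
    simp only [Set.mem_setOf_eq] at hN ⊢
    simp only [Polynomial.IsRoot, hp, Polynomial.eval_add, Polynomial.eval_mul,
      Polynomial.eval_C, Polynomial.eval_X, Polynomial.eval_pow]
    linarith [hN]
  obtain ⟨N, hN⟩ := (hfin.infinite_compl).nonempty
  simp only [Set.mem_compl_iff, Set.mem_iUnion, Set.mem_setOf_eq, not_exists] at hN
  have hNt : ∀ t ∈ F, t 0 + t 1 * N + t 2 * N ^ 2 ≠ 0 := by
    intro t ht h
    exact hN t ht h
  refine ⟨![N, -1, 0], ![0, N, -1], ?_, ?_⟩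
  · rw [LinearIndependent.pair_iff]
    intro s u h
    have h0 := congrFun h 0
    have h1 := congrFun h 1
    have h2 := congrFun h 2
    simp [Matrix.cons_val_zero, Matrix.cons_val_one] at h0 h1 h2
    refine ⟨?_, h2⟩
    subst h2
    linarith [h1]
  · intro x hx hxt
    rw [AddSubgroup.mem_closure_pair] at hx
    obtain ⟨m, n, hmn⟩ := hx
    obtain ⟨t, ht, k, hk⟩ := hxt
    -- dot with (1, N, N^2)
    have hdot : x 0 + x 1 * N + x 2 * N ^ 2 = 0 := by
      have h0 := congrFun hmn 0
      have h1 := congrFun hmn 1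
      have h2 := congrFun hmn 2
      simp at h0 h1 h2
      rw [← h0, ← h1, ← h2]; ring
    have hk0 : x 0 = k * t 0 := by rw [hk]; simp
    have hk1 : x 1 = k * t 1 := by rw [hk]; simp
    have hk2 : x 2 = k * t 2 := by rw [hk]; simp
    rw [hk0, hk1, hk2] at hdot
    have : k * (t 0 + t 1 * N + t 2 * N ^ 2) = 0 := by linarith [hdot]
    have hk0' : k = 0 := by
      rcases mul_eq_zero.mp this with h | h
      · exact h
      · exact absurd h (hNt t ht)
    rw [hk, hk0']
    simp
end
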